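/- Sufficient-decrease lemma (exact PnP-ADMM): under the z-update optimality ∇h(zᵏ) = (1/γ)(xᵏ + sᵏ⁻¹ - zᵏ), the dual update sᵏ = sᵏ⁻¹ + xᵏ - zᵏ, the proximal x-update xᵏ = prox_{γg}(zᵏ⁻¹ - sᵏ⁻¹), with h having L-Lipschitz gradient and 0 < γ ≤ 1/(4L), the augmented Lagrangian satisfies φ(xᵏ, zᵏ, sᵏ) ≤ φ(xᵏ⁻¹, zᵏ⁻¹, sᵏ⁻¹) - ((1 - γL - 2γ²L²)/(2γ))‖zᵏ - zᵏ⁻¹‖². -/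

import Mathlib

open InnerProductSpace

lemma descent_lemma {F : Type*} [NormedAddCommGroup F] [InnerProductSpace ℝ F]
    [CompleteSpace F] (h : F → ℝ) (L : ℝ) (hdiff : Differentiable ℝ h)
    (hLip : ∀ x y, ‖gradient h x - gradient h y‖ ≤ L * ‖x - y‖) (x y : F) :
    h x + (inner ℝ (gradient h x) (y - x) : ℝ) - L / 2 * ‖y - x‖ ^ 2 ≤ h y := by
  set v := y - x with hv
  set K : ℝ := (inner ℝ (gradient h x) v : ℝ) with hK
  set G : ℝ → ℝ := fun t => h (x + t • v) - t * K + L / 2 * ‖v‖ ^ 2 * t ^ 2 with hG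
  have hc : ∀ t : ℝ, HasDerivAt (fun t : ℝ => x + t • v) v t := fun t => by
    simpa using ((hasDerivAt_id t).smul_const v).const_add x
  have hF : ∀ t : ℝ, HasDerivAt G
      ((inner ℝ (gradient h (x + t • v)) v : ℝ) - K + L / 2 * ‖v‖ ^ 2 * (2 * t)) t := by
    intro t
    have h1 : HasDerivAt (fun t : ℝ => h (x + t • v))
        ((inner ℝ (gradient h (x + t • v)) v : ℝ)) t := by
      have := ((hdiff (x + t • v)).hasGradientAt.hasFDerivAt).comp_hasDerivAt t (hc t)
      exact this.congr_deriv (by simp [toDual_apply_apply])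
    have h2 : HasDerivAt (fun t : ℝ => t * K) K t := by
      simpa using (hasDerivAt_id t).mul_const K
    have h3 : HasDerivAt (fun t : ℝ => L / 2 * ‖v‖ ^ 2 * t ^ 2)
        (L / 2 * ‖v‖ ^ 2 * (2 * t)) t := by
      have := (hasDerivAt_pow 2 t).const_mul (L / 2 * ‖v‖ ^ 2)
      exact this.congr_deriv (by norm_num)
    exact (h1.sub h2).add h3
  have mono : MonotoneOn G (Set.Icc (0:ℝ) 1) := by
    apply monotoneOn_of_deriv_nonneg (convex_Icc 0 1)
    · exact (fun t _ => ((hF t).continuousAt.continuousWithinAt))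
    · exact fun t _ => ((hF t).differentiableAt).differentiableWithinAt
    · intro t ht
      rw [interior_Icc] at ht
      rw [(hF t).deriv]
      have hineq : (inner ℝ (gradient h (x + t • v)) v : ℝ) - K ≥
          -(L * (t * ‖v‖) * ‖v‖) := by
        have e : (inner ℝ (gradient h (x + t • v)) v : ℝ) - K
            = (inner ℝ (gradient h (x + t • v) - gradient h x) v : ℝ) := by
          rw [inner_sub_left]
        rw [e]
        have h1 : |(inner ℝ (gradient h (x + t • v) - gradient h x) v : ℝ)|
            ≤ ‖gradient h (x + t • v) - gradient h x‖ * ‖v‖ :=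
          abs_real_inner_le_norm _ _
        have h2 : ‖gradient h (x + t • v) - gradient h x‖ ≤ L * (t * ‖v‖) := by
          have := hLip (x + t • v) x
          simpa [norm_smul, abs_of_pos ht.1] using this
        have h3 := neg_abs_le (inner ℝ (gradient h (x + t • v) - gradient h x) v : ℝ)
        nlinarith [norm_nonneg v, norm_nonneg (gradient h (x + t • v) - gradient h x)]
      nlinarith [norm_nonneg v]
  have h01 := mono (Set.mem_Icc.2 ⟨le_refl 0, zero_le_one⟩)
    (Set.mem_Icc.2 ⟨zero_le_one, le_refl 1⟩) zero_le_one
  have e0 : G 0 = h x := by simp [hG]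
  have e1 : G 1 = h y - K + L / 2 * ‖v‖ ^ 2 := by simp [hG, hv]
  rw [e0, e1] at h01
  simp only [hK, hv] at h01 ⊢
  linarith

lemma scalar_combine (γ L gk gk1 hk hk1 A B C S p q r p1 : ℝ) (hγ : 0 < γ)
    (hub : A ≤ γ ^ 2 * L ^ 2 * B)
    (hpr : 1 / (2 * γ) * (A + 2 * r + B + 2 * (p + q) + S) + gk ≤
           1 / (2 * γ) * (C + 2 * p1 + S) + gk1)
    (hdesc : hk + 1 / γ * (-r - q) - L / 2 * B ≤ hk1) :
    gk + hk + 1 / γ * (p + A) + 1 / (2 * γ) * A ≤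
      gk1 + hk1 + 1 / γ * p1 + 1 / (2 * γ) * C
        - (1 - γ * L - 2 * γ ^ 2 * L ^ 2) / (2 * γ) * B := by
  have h2γ : (0:ℝ) < 2 * γ := by linarith
  have hne : γ ≠ 0 := ne_of_gt hγ
  have H1 : A + 2 * r + B + 2 * (p + q) + S + 2 * γ * gk ≤
      C + 2 * p1 + S + 2 * γ * gk1 := by
    have h := mul_le_mul_of_nonneg_left hpr (le_of_lt h2γ)
    calc A + 2 * r + B + 2 * (p + q) + S + 2 * γ * gk
        = 2 * γ * (1 / (2 * γ) * (A + 2 * r + B + 2 * (p + q) + S) + gk) := by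
          field_simp
      _ ≤ 2 * γ * (1 / (2 * γ) * (C + 2 * p1 + S) + gk1) := h
      _ = C + 2 * p1 + S + 2 * γ * gk1 := by field_simp
  have H2 : 2 * γ * hk - 2 * r - 2 * q - γ * L * B ≤ 2 * γ * hk1 := by
    have h := mul_le_mul_of_nonneg_left hdesc (le_of_lt h2γ)
    calc 2 * γ * hk - 2 * r - 2 * q - γ * L * B
        = 2 * γ * (hk + 1 / γ * (-r - q) - L / 2 * B) := by field_simp; ring
      _ ≤ 2 * γ * hk1 := h
  have final : 2 * γ * (gk + hk + 1 / γ * (p + A) + 1 / (2 * γ) * A) ≤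
      2 * γ * (gk1 + hk1 + 1 / γ * p1 + 1 / (2 * γ) * C
        - (1 - γ * L - 2 * γ ^ 2 * L ^ 2) / (2 * γ) * B) := by
    have e1 : 2 * γ * (gk + hk + 1 / γ * (p + A) + 1 / (2 * γ) * A)
        = 2 * γ * gk + 2 * γ * hk + 2 * (p + A) + A := by field_simp
    have e2 : 2 * γ * (gk1 + hk1 + 1 / γ * p1 + 1 / (2 * γ) * C
          - (1 - γ * L - 2 * γ ^ 2 * L ^ 2) / (2 * γ) * B)
        = 2 * γ * gk1 + 2 * γ * hk1 + 2 * p1 + C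
          - (1 - γ * L - 2 * γ ^ 2 * L ^ 2) * B := by field_simp
    rw [e1, e2]
    linarith [H1, H2, hub]
  exact le_of_mul_le_mul_left final h2γ

/-- Sufficient-decrease lemma for exact PnP-ADMM. -/
theorem stmt12 (n : ℕ) (γ L : ℝ) (hL : 0 < L) (hγ : 0 < γ) (hγL : γ ≤ 1 / (4 * L))
    (g h : EuclideanSpace ℝ (Fin n) → ℝ)
    (hdiff : Differentiable ℝ h)
    (hLip : ∀ x y, ‖gradient h x - gradient h y‖ ≤ L * ‖x - y‖)
    (xk xk1 zk zk1 sk sk1 : EuclideanSpace ℝ (Fin n))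
    (hzopt : gradient h zk = (1 / γ) • (xk + sk1 - zk))          -- z-update optimality
    (hzopt1 : gradient h zk1 = (1 / γ) • sk1)                    -- previous iterate optimality
    (hdual : sk = sk1 + xk - zk)                                 -- dual update
    (hprox : ∀ x, (1 / (2 * γ)) * ‖xk - zk1 + sk1‖ ^ 2 + g xk ≤
                  (1 / (2 * γ)) * ‖x - zk1 + sk1‖ ^ 2 + g x)     -- x-update (prox)
    (φ : EuclideanSpace ℝ (Fin n) → EuclideanSpace ℝ (Fin n) →
          EuclideanSpace ℝ (Fin n) → ℝ)
    (hφ : ∀ x z s, φ x z s = g x + h z + (1 / γ) * (inner ℝ s (x - z) : ℝ)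
        + (1 / (2 * γ)) * ‖x - z‖ ^ 2) :
    φ xk zk sk ≤ φ xk1 zk1 sk1
      - ((1 - γ * L - 2 * γ ^ 2 * L ^ 2) / (2 * γ)) * ‖zk - zk1‖ ^ 2 := by
  have hγne : γ ≠ 0 := ne_of_gt hγ
  set A : ℝ := ‖xk - zk‖ ^ 2 with hA
  set B : ℝ := ‖zk - zk1‖ ^ 2 with hB
  set C : ℝ := ‖xk1 - zk1‖ ^ 2 with hC
  set S : ℝ := ‖sk1‖ ^ 2 with hS
  set p : ℝ := (inner ℝ (xk - zk) sk1 : ℝ) with hp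
  set q : ℝ := (inner ℝ (zk - zk1) sk1 : ℝ) with hq
  set r : ℝ := (inner ℝ (xk - zk) (zk - zk1) : ℝ) with hr
  set p1 : ℝ := (inner ℝ (xk1 - zk1) sk1 : ℝ) with hp1
  -- step 1 : xk - zk = γ • (∇h zk - ∇h zk1)
  have e3 : xk - zk = γ • (gradient h zk - gradient h zk1) := by
    rw [hzopt, hzopt1, ← smul_sub, smul_smul, mul_one_div, div_self hγne, one_smul]
    abel
  have hub : A ≤ γ ^ 2 * L ^ 2 * B := by
    have hn : ‖xk - zk‖ ≤ γ * (L * ‖zk - zk1‖) := by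
      rw [e3, norm_smul, Real.norm_eq_abs, abs_of_pos hγ]
      exact mul_le_mul_of_nonneg_left (hLip zk zk1) hγ.le
    have h2 := mul_self_le_mul_self (norm_nonneg (xk - zk)) hn
    rw [hA, hB]
    nlinarith [h2]
  -- step 2 : prox inequality expanded
  have E1 : ‖xk - zk1 + sk1‖ ^ 2 = A + 2 * r + B + 2 * (p + q) + S := by
    have d1 : xk - zk1 + sk1 = ((xk - zk) + (zk - zk1)) + sk1 := by abel
    rw [d1, norm_add_sq_real, norm_add_sq_real, inner_add_left]
  have E2 : ‖xk1 - zk1 + sk1‖ ^ 2 = C + 2 * p1 + S := by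
    rw [norm_add_sq_real]
  have hpr := hprox xk1
  rw [E1, E2] at hpr
  -- step 3 : descent inequality expanded
  have hdesc := descent_lemma h L hdiff hLip zk zk1
  have Eg : (inner ℝ (gradient h zk) (zk1 - zk) : ℝ) = 1 / γ * (-r - q) := by
    rw [hzopt, real_inner_smul_left]
    congr 1
    have d2 : xk + sk1 - zk = (xk - zk) + sk1 := by abel
    have d3 : zk1 - zk = -(zk - zk1) := by abel
    rw [d2, d3, inner_add_left, inner_neg_right, inner_neg_right,
      real_inner_comm (zk - zk1) sk1, ← hq, ← hr]
    ring
  have En : ‖zk1 - zk‖ ^ 2 = B := by rw [norm_sub_rev, hB]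
  rw [Eg, En] at hdesc
  -- step 4 : combine
  have SC := scalar_combine γ L (g xk) (g xk1) (h zk) (h zk1) A B C S p q r p1 hγ
    hub hpr hdesc
  rw [hφ, hφ]
  have i3 : (inner ℝ sk (xk - zk) : ℝ) = p + A := by
    rw [hdual]
    have d4 : sk1 + xk - zk = sk1 + (xk - zk) := by abel
    rw [d4, inner_add_left, real_inner_self_eq_norm_sq, real_inner_comm (xk - zk) sk1,
      ← hp, ← hA]
  have i4 : (inner ℝ sk1 (xk1 - zk1) : ℝ) = p1 := by
    rw [real_inner_comm, hp1]
  rw [i3, i4, ← hA, ← hC]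
  linarith [SC]
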